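/- arXiv:1702.03466 — 7 statements merged into one kernel-verified Lean document; each statement's English description precedes it below -/
import Mathlib

section
/- For t > 0 and ψ ∈ [0, min(t, π/2)], define p(t,ψ) = (sin ψ + (t-ψ)cos ψ, -cos ψ + (t-ψ)sin ψ + 1). Then ‖p(t,ψ)‖ ≤ t, i.e., every point on the curve lies within the closed disk of radius t centered at the origin. -/
open Real

/-- every point p(t,ψ) = (sin ψ + (t-ψ)cos ψ, -cos ψ + (t-ψ)sin ψ + 1)
on the boundary curve lies within the closed disk of radius t about the origin. -/
theorem stmt1 (t : ℝ) (ht : 0 < t) (ψ : ℝ) (hψ : ψ ∈ Set.Icc 0 (min t (π / 2))) :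
    Real.sqrt ((Real.sin ψ + (t - ψ) * Real.cos ψ) ^ 2
      + (-Real.cos ψ + (t - ψ) * Real.sin ψ + 1) ^ 2) ≤ t := by
  obtain ⟨h0, h1⟩ := hψ
  have hψt : ψ ≤ t := le_trans h1 (min_le_left _ _)
  have hcos : 1 - ψ ^ 2 / 2 ≤ Real.cos ψ := Real.one_sub_sq_div_two_le_cos
  have hsin : Real.sin ψ ≤ ψ := Real.sin_le h0
  have hpyth : Real.sin ψ ^ 2 + Real.cos ψ ^ 2 = 1 := Real.sin_sq_add_cos_sq ψ
  have key : (Real.sin ψ + (t - ψ) * Real.cos ψ) ^ 2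
      + (-Real.cos ψ + (t - ψ) * Real.sin ψ + 1) ^ 2 ≤ t ^ 2 := by
    nlinarith [sq_nonneg (t - ψ), mul_nonneg (sub_nonneg.2 hψt) (sub_nonneg.2 hsin)]
  calc Real.sqrt _ ≤ Real.sqrt (t ^ 2) := Real.sqrt_le_sqrt key
    _ = t := Real.sqrt_sq ht.le
end

section
/- For t > 0 and ψ ∈ [0, min(t, π/2)], define p_y(t,ψ) = -cos ψ + (t-ψ) sin ψ + 1. Then the maximum of p_y(t,ψ) over ψ ∈ [0, min(t, π/2)] equals 1 - cos t if 0 < t ≤ π/2, and equals t - π/2 + 1 if t > π/2. -/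
open Real

/-! The derivative of `ψ ↦ p_y(t, ψ)` is `(t - ψ) cos ψ`, which is nonnegative on
`[-π/2, min t (π/2)]`, so the maximum is attained at the right endpoint `min t (π/2)`. -/

noncomputable def py (t ψ : ℝ) : ℝ := -cos ψ + (t - ψ) * sin ψ + 1

theorem hasDerivAt_py (t ψ : ℝ) : HasDerivAt (py t) ((t - ψ) * cos ψ) ψ := by
  have h := ((hasDerivAt_cos ψ).neg.add
    (((hasDerivAt_id ψ).const_sub t).mul (hasDerivAt_sin ψ))).add_const 1
  exact h.congr_deriv (by simp only [id]; ring)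

theorem monotoneOn_py (t : ℝ) : MonotoneOn (py t) (Set.Icc (-(π / 2)) (min t (π / 2))) := by
  refine monotoneOn_of_deriv_nonneg (convex_Icc _ _)
    (fun ψ _ => (hasDerivAt_py t ψ).continuousAt.continuousWithinAt)
    (fun ψ _ => (hasDerivAt_py t ψ).differentiableAt.differentiableWithinAt) ?_
  intro ψ hψ
  rw [interior_Icc] at hψ
  obtain ⟨hψ_lo, hψ_hi⟩ := hψ
  rw [(hasDerivAt_py t ψ).deriv]
  have hψt : 0 ≤ t - ψ := by linarith [min_le_left t (π / 2)]
  have hcos : 0 ≤ cos ψ := cos_nonneg_of_mem_Icc ⟨hψ_lo.le, hψ_hi.le.trans (min_le_right _ _)⟩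
  exact mul_nonneg hψt hcos

theorem py_min_pi_div_two (t : ℝ) :
    py t (min t (π / 2)) = if t ≤ π / 2 then 1 - cos t else t - π / 2 + 1 := by
  split_ifs with h
  · rw [min_eq_left h, py]
    ring
  · rw [min_eq_right (not_le.mp h).le, py, cos_pi_div_two, sin_pi_div_two]
    ring

/-- the maximum of p_y(t,ψ) = -cos ψ + (t-ψ) sin ψ + 1 over
ψ ∈ [0, min(t, π/2)] is 1 - cos t when 0 < t ≤ π/2, and t - π/2 + 1 when t > π/2. -/
theorem stmt2 (t : ℝ) (ht : 0 < t) :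
    IsGreatest ((fun ψ : ℝ => -Real.cos ψ + (t - ψ) * Real.sin ψ + 1) ''
        Set.Icc 0 (min t (π / 2)))
      (if t ≤ π / 2 then 1 - Real.cos t else t - π / 2 + 1) := by
  have hpos : 0 ≤ min t (π / 2) := le_min ht.le (by positivity)
  have hmono : MonotoneOn (py t) (Set.Icc 0 (min t (π / 2))) :=
    (monotoneOn_py t).mono (Set.Icc_subset_Icc_left (by linarith [pi_pos]))
  rw [← py_min_pi_div_two]
  exact hmono.map_isGreatest (isGreatest_Icc hpos)
end

section
/- Let A_conv(t) = (1/48)(12π(t² - 1) + t(48 - 6π²) + π³) and A_K(t) = (t²/2)(arcsin(1-δ(t)) + (1/2)sin(2 arcsin(1-δ(t)))) with δ(t) = (π/2-1)/t. Then lim_{t→∞} A_conv(t)/A_K(t) = 1; equivalently the Jaccard distance 1 - A_conv(t)/A_K(t) tends to 0 as t → ∞. -/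
open Real Filter Asymptotics Topology

/-! Both areas are asymptotically equivalent to `π t² / 4`: `A_conv` is a quadratic with leading
coefficient `π / 4`, and in `A_K` the angle `arcsin (1 - δ(t))` tends to `arcsin 1 = π / 2` while
`sin (2 arcsin (1 - δ(t)))` tends to `sin π = 0`. Asymptotic equivalence is transitive, and the
ratio of equivalent functions tends to `1`. -/

theorem isEquivalent_quadratic_atTop {a : ℝ} (ha : a ≠ 0) (b c : ℝ) :
    (fun t : ℝ => a * t ^ 2 + b * t + c) ~[atTop] fun t => a * t ^ 2 := by
  refine IsLittleO.isEquivalent ?_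
  have hsq : (fun t : ℝ => t ^ 2) =O[atTop] fun t => a * t ^ 2 :=
    (isBigO_const_mul_self a⁻¹ _ _).congr_left fun t => by field_simp
  have hlin : (fun t : ℝ => b * t + c) =o[atTop] fun t => t ^ 2 := by
    have h1 : (fun t : ℝ => t) =o[atTop] fun t => t ^ 2 := by
      simpa using isLittleO_pow_pow_atTop_of_lt (𝕜 := ℝ) one_lt_two
    have h0 : (fun _ : ℝ => c) =o[atTop] fun t => t ^ 2 :=
      (isLittleO_const_id_atTop c).trans h1
    exact (h1.const_mul_left b).add h0
  exact (hlin.trans_isBigO hsq).congr_left fun t => by simp only [Pi.sub_apply]; ring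

noncomputable def areaConv (t : ℝ) : ℝ :=
  (1 / 48) * (12 * π * (t ^ 2 - 1) + t * (48 - 6 * π ^ 2) + π ^ 3)

noncomputable def areaK (t : ℝ) : ℝ :=
  t ^ 2 / 2 * (arcsin (1 - (π / 2 - 1) / t) + 1 / 2 * sin (2 * arcsin (1 - (π / 2 - 1) / t)))

theorem areaConv_isEquivalent : areaConv ~[atTop] fun t => π / 4 * t ^ 2 := by
  refine (isEquivalent_quadratic_atTop (by positivity) (1 - π ^ 2 / 8) (π ^ 3 / 48 - π / 4))
    |>.congr_left (Eventually.of_forall fun t => ?_)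
  simp only [areaConv]; ring

theorem tendsto_arcsin_add_half_sin_two_arcsin :
    Tendsto (fun x => arcsin x + 1 / 2 * sin (2 * arcsin x)) (𝓝 1) (𝓝 (π / 2)) := by
  have h : Continuous fun x => arcsin x + 1 / 2 * sin (2 * arcsin x) := by fun_prop
  simpa [arcsin_one, mul_div_cancel₀] using h.tendsto 1

theorem areaK_isEquivalent : areaK ~[atTop] fun t => π / 4 * t ^ 2 := by
  have hδ : Tendsto (fun t : ℝ => 1 - (π / 2 - 1) / t) atTop (𝓝 1) := by
    simpa using tendsto_const_nhds.sub (tendsto_const_nhds.div_atTop (tendsto_id (α := ℝ)))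
  have hangle := (isEquivalent_const_iff_tendsto (by positivity : π / 2 ≠ 0)).mpr
    (tendsto_arcsin_add_half_sin_two_arcsin.comp hδ)
  refine ((IsEquivalent.refl (u := fun t : ℝ => t ^ 2 / 2)).mul hangle).congr_right
    (Eventually.of_forall fun t => ?_)
  simp only [Pi.mul_apply, Function.const_apply]; ring

theorem tendsto_areaConv_div_areaK : Tendsto (fun t => areaConv t / areaK t) atTop (𝓝 1) := by
  have hK : ∀ᶠ t in atTop, areaK t ≠ 0 :=
    areaK_isEquivalent.eventually_pos ((eventually_gt_atTop 0).mono fun _ _ => by positivity)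
      |>.mono fun _ h => h.ne'
  exact (isEquivalent_iff_tendsto_one hK).mp (areaConv_isEquivalent.trans areaK_isEquivalent.symm)

/-- the area ratio A_conv(t)/A_K(t) tends to 1 as t → ∞, equivalently
the Jaccard distance 1 - A_conv(t)/A_K(t) tends to 0. -/
theorem stmt4 :
    Tendsto (fun t : ℝ =>
        ((1 / 48) * (12 * π * (t ^ 2 - 1) + t * (48 - 6 * π ^ 2) + π ^ 3)) /
          (t ^ 2 / 2 * (Real.arcsin (1 - (π / 2 - 1) / t)
            + 1 / 2 * Real.sin (2 * Real.arcsin (1 - (π / 2 - 1) / t)))))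
      atTop (nhds 1)
    ∧ Tendsto (fun t : ℝ =>
        1 - ((1 / 48) * (12 * π * (t ^ 2 - 1) + t * (48 - 6 * π ^ 2) + π ^ 3)) /
          (t ^ 2 / 2 * (Real.arcsin (1 - (π / 2 - 1) / t)
            + 1 / 2 * Real.sin (2 * Real.arcsin (1 - (π / 2 - 1) / t)))))
      atTop (nhds 0) := by
  have hratio := tendsto_areaConv_div_areaK
  have hgap := (tendsto_const_nhds (x := (1 : ℝ))).sub hratio
  rw [sub_self] at hgap
  exact ⟨hratio, hgap⟩
end

section
/- Let t > 0 and α ∈ (0, t) with t² > 2α². Define A = 1/(2(t² - α²)) and B = 1/(2α²). Then the ellipse E = {p ∈ ℝ² : A p_x² + B p_y² ≤ 1} contains the set K = {p ∈ ℝ² : ‖p‖ ≤ t, |p_y| ≤ α}. -/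
open Real

/-- with A = 1/(2(t²-α²)) and B = 1/(2α²), the ellipse
{A x² + B y² ≤ 1} contains K = {‖p‖ ≤ t, |p_y| ≤ α}, provided 0 < α < t and t² > 2α². -/
theorem stmt10 (t α : ℝ) (ht : 0 < t) (hα : 0 < α) (hαt : α < t)
    (h2 : t ^ 2 > 2 * α ^ 2) :
    {p : ℝ × ℝ | p.1 ^ 2 + p.2 ^ 2 ≤ t ^ 2 ∧ |p.2| ≤ α} ⊆
      {p : ℝ × ℝ | (1 / (2 * (t ^ 2 - α ^ 2))) * p.1 ^ 2
        + (1 / (2 * α ^ 2)) * p.2 ^ 2 ≤ 1} := by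
  rintro ⟨x, y⟩ ⟨h1, hy⟩
  simp only [Set.mem_setOf_eq] at *
  have hD1 : (0:ℝ) < t ^ 2 - α ^ 2 := by nlinarith
  have hD2 : (0:ℝ) < α ^ 2 := by positivity
  have hy2 : y ^ 2 ≤ α ^ 2 := by nlinarith [sq_abs y, mul_self_le_mul_self (abs_nonneg y) hy]
  rw [div_mul_eq_mul_div, div_mul_eq_mul_div, div_add_div _ _ (by positivity) (by positivity),
    div_le_one (by positivity)]
  nlinarith [sq_nonneg x, mul_pos hD1 hD2, mul_le_mul_of_nonneg_left hy2 (le_of_lt (by nlinarith : (0:ℝ) < t ^ 2 - 2 * α ^ 2))]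
end

section
/- Let t > 0 and α ∈ (0, t) with t² > 2α², and let A = 1/(2(t²-α²)), B = 1/(2α²). The ellipse {A x² + B y² ≤ 1} touches the boundary of K = {‖p‖ ≤ t, |p_y| ≤ α} exactly at the four points (±√(t² - α²), ±α). -/
open Real

/-- with A = 1/(2(t²-α²)), B = 1/(2α²), the ellipse {A x² + B y² ≤ 1}
touches K = {‖p‖ ≤ t, |p_y| ≤ α} exactly at the four points (±√(t²-α²), ±α). -/
theorem stmt11 (t α : ℝ) (ht : 0 < t) (hα : 0 < α) (hαt : α < t)
    (h2 : t ^ 2 > 2 * α ^ 2) :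
    {p : ℝ × ℝ | (p.1 ^ 2 + p.2 ^ 2 ≤ t ^ 2 ∧ |p.2| ≤ α)
        ∧ (1 / (2 * (t ^ 2 - α ^ 2))) * p.1 ^ 2 + (1 / (2 * α ^ 2)) * p.2 ^ 2 = 1}
      = {(Real.sqrt (t ^ 2 - α ^ 2), α), (-Real.sqrt (t ^ 2 - α ^ 2), α),
         (Real.sqrt (t ^ 2 - α ^ 2), -α), (-Real.sqrt (t ^ 2 - α ^ 2), -α)} := by
  have hs : 0 < t ^ 2 - α ^ 2 := by nlinarith
  have hd : 0 < t ^ 2 - 2 * α ^ 2 := by linarith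
  have hsq : Real.sqrt (t ^ 2 - α ^ 2) ^ 2 = t ^ 2 - α ^ 2 := Real.sq_sqrt hs.le
  ext ⟨x, y⟩
  simp only [Set.mem_setOf_eq, Set.mem_insert_iff, Set.mem_singleton_iff, Prod.mk.injEq]
  constructor
  · rintro ⟨⟨h1, h2'⟩, h3⟩
    have hane : α ^ 2 ≠ 0 := by positivity
    have he : α ^ 2 * x ^ 2 + (t ^ 2 - α ^ 2) * y ^ 2 = 2 * (t ^ 2 - α ^ 2) * α ^ 2 := by
      field_simp at h3; nlinarith [h3]
    have hle : y ^ 2 ≤ α ^ 2 := by nlinarith [abs_le.mp h2', sq_abs y]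
    have hy2 : y ^ 2 = α ^ 2 := by nlinarith [sq_nonneg x]
    have hx2 : x ^ 2 = t ^ 2 - α ^ 2 := by
      refine mul_left_cancel₀ hane ?_
      linear_combination he - (t ^ 2 - α ^ 2) * hy2
    have hy : (y - α) * (y + α) = 0 := by nlinarith
    have hx : (x - Real.sqrt (t ^ 2 - α ^ 2)) * (x + Real.sqrt (t ^ 2 - α ^ 2)) = 0 := by
      nlinarith
    rcases mul_eq_zero.mp hx with hx' | hx' <;> rcases mul_eq_zero.mp hy with hy' | hy'
    · exact Or.inl ⟨by linarith, by linarith⟩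
    · exact Or.inr (Or.inr (Or.inl ⟨by linarith, by linarith⟩))
    · exact Or.inr (Or.inl ⟨by linarith, by linarith⟩)
    · exact Or.inr (Or.inr (Or.inr ⟨by linarith, by linarith⟩))
  · have hell : (1 / (2 * (t ^ 2 - α ^ 2))) * Real.sqrt (t ^ 2 - α ^ 2) ^ 2 +
        (1 / (2 * α ^ 2)) * α ^ 2 = 1 := by
      rw [hsq]; field_simp; ring
    rintro (⟨hx, hy⟩ | ⟨hx, hy⟩ | ⟨hx, hy⟩ | ⟨hx, hy⟩) <;> subst hx <;> subst hy
    all_goals exact ⟨⟨by simp only [neg_sq, hsq]; linarith, by rw [abs_le]; constructor <;> linarith⟩,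
      by simpa using hell⟩
end

section
/- Let t > (1 + 1/√2)(π - 2) and α(t) = t - π/2 + 1. Among all axis-aligned ellipses {A x² + B y² ≤ 1} with A,B > 0 containing K(t) = {‖p‖ ≤ t, |p_y| ≤ α(t)} and touching it at four symmetric points (so B = (1 - A(t² - α(t)²))/α(t)² and A ≤ 1/t²), the area is minimized by A = B = 1/t², i.e., the circle of radius t. -/
open Real

/-! The ellipses touching `K(t)` at `(±√(t² - α²), ±α)` form the one-parameter family
`B = (1 - A (t² - α²)) / α²`, and the area `π / √(A B)` is minimal where `A B` is maximal.
As a function of `A`, `A B` is a concave parabola with vertex at `1 / (2 (t² - α²))`; the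
threshold on `t` says exactly that `t² < 2 α²`, i.e. that the vertex lies to the right of the
admissible interval `(0, 1 / t²]`. Hence the maximum is at `A = 1 / t²`, where `B = A`. -/

/-- The coefficient `B` of the ellipse `A x² + B y² ≤ 1` through `(±√(t² - a²), ±a)`. -/
noncomputable def touchingCoeff (t a A : ℝ) : ℝ := (1 - A * (t ^ 2 - a ^ 2)) / a ^ 2

lemma touchingCoeff_one_div_sq {t a : ℝ} (ht : t ≠ 0) (ha : a ≠ 0) :
    touchingCoeff t a (1 / t ^ 2) = 1 / t ^ 2 := by
  unfold touchingCoeff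
  field_simp
  ring

lemma touchingCoeff_pos {t a A : ℝ} (ha : 0 < a) (hat : a ≤ t) (hA : A ≤ 1 / t ^ 2) :
    0 < touchingCoeff t a A := by
  have ht : 0 < t := ha.trans_le hat
  have hAc : A * (t ^ 2 - a ^ 2) ≤ 1 / t ^ 2 * (t ^ 2 - a ^ 2) :=
    mul_le_mul_of_nonneg_right hA (by nlinarith)
  have hlt : 1 / t ^ 2 * (t ^ 2 - a ^ 2) < 1 := by
    rw [one_div_mul_eq_div, div_lt_one (by positivity)]
    nlinarith
  exact div_pos (by linarith) (by positivity)

/-- The parabola `x (1 - c x)` is monotone left of its vertex `1 / (2 c)`. -/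
lemma mul_one_sub_mul_le_of_le {c x y : ℝ} (hc : 0 ≤ c) (hxy : x ≤ y) (hy : 2 * c * y ≤ 1) :
    x * (1 - x * c) ≤ y * (1 - y * c) := by
  have hfactor : 0 ≤ 1 - c * (x + y) := by nlinarith
  nlinarith [mul_nonneg (sub_nonneg.2 hxy) hfactor]

lemma mul_touchingCoeff_le {t a A : ℝ} (ha : 0 < a) (hat : a ≤ t) (h2 : t ^ 2 ≤ 2 * a ^ 2)
    (hA : A ≤ 1 / t ^ 2) :
    A * touchingCoeff t a A ≤ 1 / t ^ 2 * touchingCoeff t a (1 / t ^ 2) := by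
  have ht : 0 < t := ha.trans_le hat
  have hvertex : 2 * (t ^ 2 - a ^ 2) * (1 / t ^ 2) ≤ 1 := by
    rw [mul_one_div, div_le_one (by positivity)]
    linarith
  have hparabola := mul_one_sub_mul_le_of_le (by nlinarith) hA hvertex
  unfold touchingCoeff
  rw [mul_div_assoc', mul_div_assoc']
  exact div_le_div_of_nonneg_right hparabola (sq_nonneg a)

lemma pi_div_sqrt_touching_ge {t a A : ℝ} (ha : 0 < a) (hat : a ≤ t) (h2 : t ^ 2 ≤ 2 * a ^ 2)
    (hA0 : 0 < A) (hA : A ≤ 1 / t ^ 2) :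
    π / √(1 / t ^ 2 * touchingCoeff t a (1 / t ^ 2)) ≤ π / √(A * touchingCoeff t a A) :=
  div_le_div_of_nonneg_left pi_pos.le (sqrt_pos.2 (mul_pos hA0 (touchingCoeff_pos ha hat hA)))
    (sqrt_le_sqrt (mul_touchingCoeff_le ha hat h2 hA))

lemma pi_div_sqrt_touching_one_div_sq {t a : ℝ} (ht : t ≠ 0) (ha : a ≠ 0) :
    π / √(1 / t ^ 2 * touchingCoeff t a (1 / t ^ 2)) = π * t ^ 2 := by
  rw [touchingCoeff_one_div_sq ht ha, ← sq, sqrt_sq (by positivity), div_div_eq_mul_div, div_one]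

lemma lt_sqrt_two_mul_sub {t d : ℝ} (h : (2 + √2) * d < t) : t < √2 * (t - d) := by
  have hs2 : √2 * √2 = 2 := mul_self_sqrt (by norm_num)
  have hs1 : 1 < √2 := by nlinarith [sqrt_nonneg 2]
  -- multiply `h` by `√2 - 1 > 0`, using `(2 + √2)(√2 - 1) = √2`
  linear_combination mul_lt_mul_of_pos_left h (sub_pos.2 hs1) - d * hs2

/-- for t > (1 + 1/√2)(π - 2) and α = t - π/2 + 1, among the axis-aligned
ellipses {A x² + B y² ≤ 1} with B = (1 - A(t²-α²))/α² and 0 < A ≤ 1/t², the area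
π/√(AB) is minimized at A = 1/t², where it equals π t² (the circle of radius t). -/
theorem stmt12 (t : ℝ) (ht : (1 + 1 / Real.sqrt 2) * (π - 2) < t) :
    (∀ A : ℝ, 0 < A → A ≤ 1 / t ^ 2 →
      π / Real.sqrt ((1 / t ^ 2) *
          ((1 - (1 / t ^ 2) * (t ^ 2 - (t - π / 2 + 1) ^ 2)) / (t - π / 2 + 1) ^ 2))
        ≤ π / Real.sqrt (A *
          ((1 - A * (t ^ 2 - (t - π / 2 + 1) ^ 2)) / (t - π / 2 + 1) ^ 2)))
    ∧ π / Real.sqrt ((1 / t ^ 2) *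
          ((1 - (1 / t ^ 2) * (t ^ 2 - (t - π / 2 + 1) ^ 2)) / (t - π / 2 + 1) ^ 2))
        = π * t ^ 2 := by
  have hpi := pi_gt_three
  have ht0 : 0 < t := (mul_pos (by positivity) (by linarith)).trans ht
  have hthreshold : (1 + 1 / √2) * (π - 2) = (2 + √2) * (π / 2 - 1) := by
    field_simp
    linear_combination -(π - 2) * mul_self_sqrt (zero_le_two : (0 : ℝ) ≤ 2)
  have hta : t < √2 * (t - π / 2 + 1) := by
    convert lt_sqrt_two_mul_sub (hthreshold ▸ ht) using 2
    ring
  have hat : t - π / 2 + 1 ≤ t := by linarith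
  generalize t - π / 2 + 1 = a at hta hat ⊢
  have ha : 0 < a := pos_of_mul_pos_right (ht0.trans hta) (sqrt_nonneg 2)
  have h2 : t ^ 2 ≤ 2 * a ^ 2 := by nlinarith [sq_sqrt (zero_le_two : (0 : ℝ) ≤ 2)]
  exact ⟨fun A hA0 hA => pi_div_sqrt_touching_ge ha hat h2 hA0 hA,
    pi_div_sqrt_touching_one_div_sq ht0.ne' ha.ne'⟩
end

section
/- For 0 < t ≤ π/2, the ellipse E(t) = {(x,y) ∈ ℝ² : x²/(2(t² - (1-cos t)²)) + y²/(2(1-cos t)²) ≤ 1} has area π·√(2(t² - (1-cos t)²))·√2·(1-cos t), and this area is strictly less than the area πt² of the disk of radius t. -/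
/-!
The ellipse is the preimage of the unit disk under the diagonal linear map
`(x, y) ↦ (x / √A, y / √B)`, so its area is `π √A √B` by the change of variables formula for
linear maps. For the comparison with `π t²`, AM-GM gives `√(2(t² - α²)) · √(2α²) ≤ t²`, with
equality only if `t² = 2α²`; this is excluded since `α = 1 - cos t < t² / 2` (strict Taylor bound)
and `α ≤ 1` on `(0, π/2]`.
-/

open Real MeasureTheory

lemma volume_unitDisk : volume {p : ℝ × ℝ | p.1 ^ 2 + p.2 ^ 2 ≤ 1} = ENNReal.ofReal π := by
  have hdisk : Complex.measurableEquivRealProd ⁻¹' {p : ℝ × ℝ | p.1 ^ 2 + p.2 ^ 2 ≤ 1}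
      = Metric.closedBall (0 : ℂ) 1 := by
    ext z
    simp [Complex.measurableEquivRealProd_apply, Complex.norm_def, Complex.normSq_apply, ← sq]
  rw [← Complex.volume_preserving_equiv_real_prod.measure_preimage
      (measurableSet_le (by fun_prop) (by fun_prop)).nullMeasurableSet, hdisk,
    Complex.volume_closedBall, ← NNReal.coe_real_pi, ENNReal.ofReal_coe_nnreal]
  simp

lemma volume_ellipse {A B : ℝ} (hA : 0 < A) (hB : 0 < B) :
    volume {p : ℝ × ℝ | p.1 ^ 2 / A + p.2 ^ 2 / B ≤ 1} = ENNReal.ofReal (π * √A * √B) := by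
  let f : ℝ × ℝ →ₗ[ℝ] ℝ × ℝ := (√A)⁻¹ • LinearMap.id |>.prodMap ((√B)⁻¹ • LinearMap.id)
  have hdet : LinearMap.det f = (√A)⁻¹ * (√B)⁻¹ := by
    simp [f, LinearMap.det_prodMap]
  have hpre : {p : ℝ × ℝ | p.1 ^ 2 / A + p.2 ^ 2 / B ≤ 1}
      = f ⁻¹' {p : ℝ × ℝ | p.1 ^ 2 + p.2 ^ 2 ≤ 1} := by
    ext p
    simp [f, mul_pow, inv_pow, sq_sqrt hA.le, sq_sqrt hB.le, div_eq_inv_mul]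
  rw [hpre, Measure.addHaar_preimage_linearMap _ (by rw [hdet]; positivity), hdet,
    volume_unitDisk, abs_of_pos (by positivity), ← ENNReal.ofReal_mul (by positivity)]
  congr 1
  field_simp

lemma cos_lt_one_of_pos_of_le_pi {t : ℝ} (ht0 : 0 < t) (htπ : t ≤ π) : cos t < 1 := by
  simpa using cos_lt_cos_of_nonneg_of_le_pi le_rfl htπ ht0

lemma two_mul_one_sub_cos_sq_lt_sq {t : ℝ} (ht : t ∈ Set.Ioc 0 (π / 2)) :
    2 * (1 - cos t) ^ 2 < t ^ 2 := by
  obtain ⟨ht0, htπ⟩ := ht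
  have hcos_nonneg : 0 ≤ cos t := cos_nonneg_of_mem_Icc ⟨by linarith, htπ⟩
  have hcos_gt : 1 - t ^ 2 / 2 < cos t := one_sub_sq_div_two_lt_cos ht0.ne'
  nlinarith [cos_le_one t]

lemma sqrt_two_mul_sub_mul_sqrt_two_mul_lt {s v : ℝ} (hv : 0 ≤ v) (hvs : 2 * v < s) :
    √(2 * (s - v)) * √(2 * v) < s := by
  rw [← sqrt_mul (by linarith), sqrt_lt' (by linarith)]
  nlinarith [sq_pos_of_pos (sub_pos.2 hvs)]

/-- for 0 < t ≤ π/2 and α = 1 - cos t, the minimum-area ellipse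
E(t) = {x²/(2(t²-α²)) + y²/(2α²) ≤ 1} has area π √(2(t²-α²)) · √2 α, which is strictly
smaller than the area π t² of the disk of radius t. -/
theorem stmt19 (t : ℝ) (ht : t ∈ Set.Ioc 0 (π / 2)) :
    volume {p : ℝ × ℝ |
        p.1 ^ 2 / (2 * (t ^ 2 - (1 - Real.cos t) ^ 2))
          + p.2 ^ 2 / (2 * (1 - Real.cos t) ^ 2) ≤ 1}
      = ENNReal.ofReal
          (π * Real.sqrt (2 * (t ^ 2 - (1 - Real.cos t) ^ 2))
            * (Real.sqrt 2 * (1 - Real.cos t)))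
    ∧ π * Real.sqrt (2 * (t ^ 2 - (1 - Real.cos t) ^ 2))
        * (Real.sqrt 2 * (1 - Real.cos t)) < π * t ^ 2 := by
  have hα : 0 < 1 - Real.cos t :=
    sub_pos.2 (cos_lt_one_of_pos_of_le_pi ht.1 (by linarith [ht.2, pi_pos]))
  have hkey : 2 * (1 - Real.cos t) ^ 2 < t ^ 2 := two_mul_one_sub_cos_sq_lt_sq ht
  have hsqrt : √2 * (1 - Real.cos t) = √(2 * (1 - Real.cos t) ^ 2) := by
    rw [sqrt_mul zero_le_two, sqrt_sq hα.le]
  rw [hsqrt]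
  refine ⟨volume_ellipse (by nlinarith) (by positivity), ?_⟩
  rw [mul_assoc]
  exact mul_lt_mul_of_pos_left (sqrt_two_mul_sub_mul_sqrt_two_mul_lt (sq_nonneg _) hkey) pi_pos
end
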